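/- arXiv:1707.05991 — 3 statements merged into one kernel-verified Lean document; each statement's English description precedes it below -/
import Mathlib

section
/- Let 0 < α < 1 and let n ≥ 1 be a natural number. Then |∑_{j=1}^∞ (-1)^j (1/j)(1-α^j)^n| ≤ (1-α)^n + 2·∑_{j=1}^∞ (1/(j(j+1)))·(1-α^{j+1})^n, where the series on the left converges and the series on the right converges absolutely. -/
/-!
Write `b j = (1 - α ^ j) ^ n`; it is nondecreasing in `j` with values in `[0, 1]`, so the series
converges by Abel's test against the alternating harmonic series. Monotonicity gives
`b j / j - b (j + 1) / (j + 1) ≤ b (j + 1) / (j (j + 1))`. Grouping the terms in pairs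
`(2k + 1, 2k + 2)` bounds the partial sums ending at an even index below by `-T`, and grouping
them in pairs `(2k + 2, 2k + 3)` after the first term `-b 1` bounds those ending at an odd index
above by `T - b 1`, where `T` is the right-hand series. Hence `|L| ≤ T`.
-/

open Filter Finset

/-- **Abel's test**. -/
theorem Monotone.cauchySeq_series_mul_of_bddAbove {b z : ℕ → ℝ} (hb : Monotone b)
    (hbdd : BddAbove (Set.range b)) (hz : CauchySeq fun n ↦ ∑ i ∈ range n, z i) :
    CauchySeq fun n ↦ ∑ i ∈ range n, z i * b i := by
  obtain ⟨B, hB⟩ : ∃ B, Tendsto b atTop (nhds B) := ⟨_, tendsto_atTop_ciSup hb hbdd⟩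
  obtain ⟨R, -, hR⟩ := cauchySeq_bdd hz
  have hdirichlet := Monotone.cauchySeq_series_mul_of_tendsto_zero_of_bounded
    (fun _ _ h ↦ sub_le_sub_right (hb h) B) (by simpa using hB.sub_const B) (z := z) (b := R)
    fun n ↦ by simpa [dist_eq_norm] using (hR n 0).le
  convert hdirichlet.add ((Real.uniformContinuous_const_mul (x := B)).comp_cauchySeq hz) using 1
  ext n
  simp only [Pi.add_apply, Function.comp_apply, smul_eq_mul, mul_sum, ← sum_add_distrib]
  exact sum_congr rfl fun i _ ↦ by ring

theorem cauchySeq_sum_range_neg_one_pow_mul_one_div :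
    CauchySeq fun n ↦ ∑ i ∈ range n, (-1 : ℝ) ^ i * (1 / i) := by
  rw [← cauchySeq_shift 1]
  have hanti : Antitone fun i : ℕ ↦ 1 / ((i : ℝ) + 1) := fun i j h ↦
    one_div_le_one_div_of_le (by positivity) (by gcongr)
  convert (hanti.cauchySeq_alternating_series_of_tendsto_zero
    tendsto_one_div_add_atTop_nhds_zero_nat).neg using 2 with n
  simp [sum_range_succ', pow_succ, ← sum_neg_distrib]

theorem neg_one_pow_mul_add_le {b : ℕ → ℝ} {i : ℕ} (hb : b (i + 1) ≤ b (i + 2)) :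
    (-1) ^ (i + 1) * ((-1) ^ (i + 1) * (1 / ((i + 1 : ℕ) : ℝ)) * b (i + 1) +
      (-1) ^ (i + 2) * (1 / ((i + 2 : ℕ) : ℝ)) * b (i + 2)) ≤
      1 / (((i : ℝ) + 1) * ((i : ℝ) + 2)) * b (i + 2) := by
  have hsq : (-1 : ℝ) ^ (i + 1) * (-1) ^ (i + 1) = 1 := by
    rw [← mul_pow]; norm_num
  rw [pow_succ (-1 : ℝ) (i + 1)]
  push_cast
  calc _ = b (i + 1) / ((i : ℝ) + 1) - b (i + 2) / ((i : ℝ) + 2) := by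
        linear_combination (b (i + 1) / ((i : ℝ) + 1) - b (i + 2) / ((i : ℝ) + 2)) * hsq
    _ ≤ b (i + 2) / ((i : ℝ) + 1) - b (i + 2) / ((i : ℝ) + 2) := by gcongr
    _ = _ := by field_simp; ring

theorem summable_one_div_add_one_mul_add_two :
    Summable fun i : ℕ ↦ 1 / (((i : ℝ) + 1) * ((i : ℝ) + 2)) := by
  refine ((summable_nat_add_iff 1).2 (Real.summable_one_div_nat_pow.2 one_lt_two)).of_nonneg_of_le
    (fun i ↦ by positivity) fun i ↦ ?_
  push_cast
  gcongr
  nlinarith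

theorem monotone_one_sub_pow_pow {α : ℝ} (h0 : 0 ≤ α) (h1 : α ≤ 1) (n : ℕ) :
    Monotone fun j : ℕ ↦ (1 - α ^ j) ^ n := fun _ _ hij ↦
  pow_le_pow_left₀ (sub_nonneg.2 (pow_le_one₀ h0 h1))
    (sub_le_sub_left (pow_le_pow_of_le_one h0 h1 hij) 1) n

section PairedPartialSums

variable {a c : ℕ → ℝ}

-- `hpair` bounds the pairs starting at an odd index below by `-c i`, the others above by `c i`.
theorem sub_sum_le_sum_range_two_mul_add_one
    (hpair : ∀ i, (-1) ^ (i + 1) * (a (i + 1) + a (i + 2)) ≤ c i) (M : ℕ) :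
    a 0 - ∑ k ∈ range M, c (2 * k) ≤ ∑ j ∈ range (2 * M + 1), a j := by
  induction M with
  | zero => simp
  | succ M ih =>
    have hsign : (-1 : ℝ) ^ (2 * M + 1) = -1 := Odd.neg_one_pow ⟨M, rfl⟩
    have := hpair (2 * M)
    rw [hsign] at this
    rw [show 2 * (M + 1) + 1 = 2 * M + 1 + 1 + 1 by ring, sum_range_succ a (2 * M + 1 + 1),
      sum_range_succ a (2 * M + 1), sum_range_succ (fun k ↦ c (2 * k)) M]
    linarith

theorem sum_range_two_mul_add_two_le
    (hpair : ∀ i, (-1) ^ (i + 1) * (a (i + 1) + a (i + 2)) ≤ c i) (M : ℕ) :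
    ∑ j ∈ range (2 * M + 2), a j ≤ a 0 + a 1 + ∑ k ∈ range M, c (2 * k + 1) := by
  induction M with
  | zero => simp [sum_range_succ]
  | succ M ih =>
    have hsign : (-1 : ℝ) ^ (2 * M + 1 + 1) = 1 := Even.neg_one_pow ⟨M + 1, by ring⟩
    have := hpair (2 * M + 1)
    rw [hsign, one_mul] at this
    rw [show 2 * (M + 1) + 2 = 2 * M + 2 + 1 + 1 by ring, sum_range_succ a (2 * M + 2 + 1),
      sum_range_succ a (2 * M + 2), sum_range_succ (fun k ↦ c (2 * k + 1)) M]
    linarith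

theorem sum_range_comp_le_tsum (hc0 : ∀ i, 0 ≤ c i) (hc : Summable c) {g : ℕ → ℕ}
    (hg : g.Injective) (M : ℕ) : ∑ k ∈ range M, c (g k) ≤ ∑' i, c i := by
  simpa using hc.sum_le_tsum ((range M).map ⟨g, hg⟩) fun i _ ↦ hc0 i

theorem abs_le_tsum_of_tendsto_of_pair_le {L : ℝ}
    (hL : Tendsto (fun m ↦ ∑ j ∈ range m, a j) atTop (nhds L))
    (hpair : ∀ i, (-1) ^ (i + 1) * (a (i + 1) + a (i + 2)) ≤ c i)
    (hc0 : ∀ i, 0 ≤ c i) (hc : Summable c) (ha0 : a 0 = 0) (ha1 : a 1 ≤ 0) :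
    |L| ≤ ∑' i, c i := by
  have hodd : Tendsto (fun M ↦ 2 * M + 1) atTop atTop :=
    tendsto_atTop_mono (fun M ↦ by simp only [id]; omega) tendsto_id
  have heven : Tendsto (fun M ↦ 2 * M + 2) atTop atTop :=
    tendsto_atTop_mono (fun M ↦ by simp only [id]; omega) tendsto_id
  rw [abs_le]
  constructor
  · refine ge_of_tendsto' (hL.comp hodd) fun M ↦ ?_
    rw [Function.comp_apply]
    have := sum_range_comp_le_tsum hc0 hc (g := (2 * ·)) (fun _ _ h ↦ by simpa using h) M
    linarith [sub_sum_le_sum_range_two_mul_add_one hpair M]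
  · refine le_of_tendsto' (hL.comp heven) fun M ↦ ?_
    rw [Function.comp_apply]
    have := sum_range_comp_le_tsum hc0 hc (g := (2 * · + 1)) (fun _ _ h ↦ by simpa using h) M
    linarith [sum_range_two_mul_add_two_le hpair M]

end PairedPartialSums

theorem stmt_2_general (α : ℝ) (hα0 : 0 < α) (hα1 : α < 1) (n : ℕ) :
    Summable (fun j : ℕ =>
      (1 / (((j : ℝ) + 1) * ((j : ℝ) + 2))) * (1 - α ^ (j + 2)) ^ n) ∧
    ∃ L : ℝ, Tendsto (fun J : ℕ => ∑ j ∈ Finset.Icc 1 J,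
        (-1 : ℝ) ^ j * (1 / (j : ℝ)) * (1 - α ^ j) ^ n) atTop (nhds L) ∧
      |L| ≤ (1 - α) ^ n +
        2 * ∑' j : ℕ,
          (1 / (((j : ℝ) + 1) * ((j : ℝ) + 2))) * (1 - α ^ (j + 2)) ^ n := by
  have hb0 : ∀ j : ℕ, 0 ≤ (1 - α ^ j) ^ n := fun j ↦
    pow_nonneg (sub_nonneg.2 (pow_le_one₀ hα0.le hα1.le)) n
  have hb1 : ∀ j : ℕ, (1 - α ^ j) ^ n ≤ 1 := fun j ↦
    pow_le_one₀ (sub_nonneg.2 (pow_le_one₀ hα0.le hα1.le)) (sub_le_self _ (by positivity))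
  have hb := monotone_one_sub_pow_pow hα0.le hα1.le n
  have hc0 : ∀ j : ℕ, 0 ≤ 1 / (((j : ℝ) + 1) * ((j : ℝ) + 2)) * (1 - α ^ (j + 2)) ^ n :=
    fun j ↦ mul_nonneg (by positivity) (hb0 _)
  have hc := summable_one_div_add_one_mul_add_two.of_nonneg_of_le hc0 fun j ↦
    mul_le_of_le_one_right (by positivity) (hb1 _)
  obtain ⟨L, hL⟩ := cauchySeq_tendsto_of_complete <| hb.cauchySeq_series_mul_of_bddAbove
    ⟨1, Set.forall_mem_range.2 hb1⟩ cauchySeq_sum_range_neg_one_pow_mul_one_div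
  refine ⟨hc, L, (hL.comp (tendsto_add_atTop_nat 1)).congr fun J ↦ ?_, ?_⟩
  · rw [Function.comp_apply, Nat.range_succ_eq_Icc_zero,
      ← insert_Icc_add_one_left_eq_Icc J.zero_le, sum_insert (by simp)]
    simp
  · refine (abs_le_tsum_of_tendsto_of_pair_le hL (fun i ↦ ?_) hc0 hc (by simp)
      (by simpa using hb0 1)).trans ?_
    · exact neg_one_pow_mul_add_le (b := fun j ↦ (1 - α ^ j) ^ n) (hb (i + 1).le_succ)
    · have hT : (0 : ℝ) ≤ ∑' j : ℕ, _ := tsum_nonneg hc0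
      linarith [pow_nonneg (sub_nonneg.2 hα1.le) n]

/-- Key intermediate estimate in the proof of Lemma 5.2:
`|∑_{j=1}^∞ (-1)^j (1/j)(1-α^j)^n| ≤ (1-α)^n + 2 ∑_{j=1}^∞ (1/(j(j+1)))(1-α^{j+1})^n`,
where the left series converges and the right series converges absolutely.
(The right-hand series is indexed by `j : ℕ` via the shift `j ↦ j+1`.) -/
theorem stmt_2 (α : ℝ) (hα0 : 0 < α) (hα1 : α < 1) (n : ℕ) (hn : 1 ≤ n) :
    Summable (fun j : ℕ =>
      (1 / (((j : ℝ) + 1) * ((j : ℝ) + 2))) * (1 - α ^ (j + 2)) ^ n) ∧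
    ∃ L : ℝ, Tendsto (fun J : ℕ => ∑ j ∈ Finset.Icc 1 J,
        (-1 : ℝ) ^ j * (1 / (j : ℝ)) * (1 - α ^ j) ^ n) atTop (nhds L) ∧
      |L| ≤ (1 - α) ^ n +
        2 * ∑' j : ℕ,
          (1 / (((j : ℝ) + 1) * ((j : ℝ) + 2))) * (1 - α ^ (j + 2)) ^ n :=
  stmt_2_general α hα0 hα1 n
end

section
/- Let V be a type, let η be a finite subset of V, let x, y ∈ η be distinct elements, and let g : Finset V → ℝ be a function satisfying the decoupling property: for every subset ξ of η ∖ {x,y}, g(ξ ∪ {x,y}) + g(ξ) = g(ξ ∪ {x}) + g(ξ ∪ {y}). Then ∑_{ξ ⊆ η} (-1)^{|η| - |ξ|} · g(ξ) = 0. -/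
open Finset

theorem sum_powerset_insert_neg_one_pow_mul {V R : Type*} [DecidableEq V] [CommRing R]
    {a : V} {s : Finset V} (ha : a ∉ s) (g : Finset V → R) :
    ∑ ξ ∈ (insert a s).powerset, (-1 : R) ^ (#(insert a s) - #ξ) * g ξ =
      ∑ ξ ∈ s.powerset, (-1 : R) ^ (#s - #ξ) * (g (insert a ξ) - g ξ) := by
  rw [sum_powerset_insert ha, ← sum_add_distrib]
  refine sum_congr rfl fun ξ hξ => ?_
  have hξs : ξ ⊆ s := mem_powerset.mp hξ
  have hexp : #(insert a s) - #ξ = #s - #ξ + 1 := by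
    rw [card_insert_of_notMem ha]
    have := card_le_card hξs
    omega
  have hexp_insert : #(insert a s) - #(insert a ξ) = #s - #ξ := by
    rw [card_insert_of_notMem ha, card_insert_of_notMem fun h => ha (hξs h)]
    omega
  rw [hexp, hexp_insert, pow_succ]
  ring

/-- Combinatorial core of Corollary 3.9 (finite-range property of the vacuum
potential): if `x ≠ y` are elements of the finite set `η` and
`g : Finset V → ℝ` satisfies the decoupling property
`g(ξ ∪ {x,y}) + g(ξ) = g(ξ ∪ {x}) + g(ξ ∪ {y})` for every `ξ ⊆ η \ {x,y}`,
then the alternating (Möbius) sum `∑_{ξ ⊆ η} (-1)^{|η|-|ξ|} g(ξ)` vanishes. -/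
theorem stmt_8 {V : Type*} [DecidableEq V] (η : Finset V) (x y : V)
    (hx : x ∈ η) (hy : y ∈ η) (hxy : x ≠ y) (g : Finset V → ℝ)
    (hg : ∀ ξ : Finset V, ξ ⊆ η \ {x, y} →
      g (ξ ∪ {x, y}) + g ξ = g (ξ ∪ {x}) + g (ξ ∪ {y})) :
    ∑ ξ ∈ η.powerset, (-1 : ℝ) ^ (η.card - ξ.card) * g ξ = 0 := by
  have hyη : y ∉ η \ {x, y} := by simp
  have hxη : x ∉ insert y (η \ {x, y}) := by simp [hxy]
  have hη : η = insert x (insert y (η \ {x, y})) := by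
    conv_lhs => rw [← union_sdiff_of_subset (insert_subset hx (singleton_subset_iff.mpr hy))]
    rw [insert_union, singleton_union]
  -- Two peels turn the sum into the Möbius sum of the mixed second difference, which vanishes.
  rw [hη, sum_powerset_insert_neg_one_pow_mul hxη, sum_powerset_insert_neg_one_pow_mul hyη]
  refine sum_eq_zero fun ξ hξ => ?_
  have h := hg ξ (mem_powerset.mp hξ)
  rw [union_insert, union_singleton, union_singleton] at h
  linear_combination (-1 : ℝ) ^ (#(η \ {x, y}) - #ξ) * h
end

section
/- Let 0 < a < 1 and 0 < b ≤ 1, and let n, m be natural numbers with n + m ≥ 1. Then the series ∑_{j=1}^∞ (-1)^{j+1} (1/j)(1-a^j)^n (1-b^j)^m converges, and ∑_{k=0}^{n} ∑_{l=0}^{m} C(n,k)·C(m,l)·(-1)^{(n-k)+(m-l)} · log(1 + a^k b^l) = (-1)^{n+m} · ∑_{j=1}^∞ (-1)^{j+1} (1/j)(1-a^j)^n (1-b^j)^m, where C(n,k) denotes the binomial coefficient and log the natural logarithm. -/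
/-!
Each `log (1 + a^k b^l)` is the sum of the Taylor series `∑_{j ≥ 1} (-1)^{j+1} x^j / j` at
`x = a^k b^l ∈ (0, 1]`; at `x = 1` (the term `k = l = 0`) this is the alternating harmonic series,
whose value `log 2` comes from Abel's limit theorem. A finite linear combination of convergent
series converges to the combination of the sums, and by the binomial theorem the coefficient of
`(-1)^{j+1} / j` in the combination collapses to `(-1)^{n+m} (1 - a^j)^n (1 - b^j)^m`.
-/

open Filter

open Finset Topology

lemma sum_Icc_one_eq_sum_range {M : Type*} [AddCommMonoid M] (f : ℕ → M) (J : ℕ) :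
    ∑ j ∈ Icc 1 J, f j = ∑ i ∈ range J, f (i + 1) := by
  rw [range_eq_Ico, sum_Ico_add' f 0 J 1, zero_add, ← Ico_add_one_right_eq_Icc]

lemma hasSum_log_one_add_of_abs_lt_one {x : ℝ} (hx : |x| < 1) :
    HasSum (fun i : ℕ ↦ (-1) ^ i * x ^ (i + 1) / (i + 1)) (Real.log (1 + x)) := by
  have h := (Real.hasSum_pow_div_log_of_abs_lt_one (x := -x) (by rwa [abs_neg])).neg
  rw [neg_neg, sub_neg_eq_add] at h
  refine h.congr_fun fun i ↦ ?_
  rw [neg_pow, neg_pow]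
  ring

lemma tendsto_sum_range_alternating_harmonic :
    Tendsto (fun J ↦ ∑ i ∈ range J, (-1 : ℝ) ^ i * (1 / (i + 1)))
      atTop (𝓝 (Real.log 2)) := by
  obtain ⟨l, hl⟩ := Antitone.tendsto_alternating_series_of_tendsto_zero
    (fun i j hij ↦ Nat.one_div_le_one_div hij) tendsto_one_div_add_atTop_nhds_zero_nat
  suffices l = Real.log 2 from this ▸ hl
  -- Abel's theorem: `l` is the limit at `1⁻` of `∑ (-1)^i x^i / (i + 1) = log (1 + x) / x`.
  have h_series : (fun x : ℝ ↦ ∑' i : ℕ, (-1) ^ i * (1 / ((i : ℝ) + 1)) * x ^ i)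
      =ᶠ[𝓝[<] 1] fun x ↦ Real.log (1 + x) / x := by
    filter_upwards [Ioo_mem_nhdsLT one_pos] with x hx
    have hx' : |x| < 1 := abs_lt.2 ⟨by linarith [hx.1], hx.2⟩
    refine ((hasSum_log_one_add_of_abs_lt_one hx').div_const x).tsum_eq ▸ tsum_congr fun i ↦ ?_
    field_simp [hx.1.ne']
    ring
  have h_cont : ContinuousAt (fun x : ℝ ↦ Real.log (1 + x) / x) 1 := by
    fun_prop (disch := norm_num)
  refine tendsto_nhds_unique
    ((Real.tendsto_tsum_powerSeries_nhdsWithin_lt hl).congr' h_series) ?_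
  simpa [one_add_one_eq_two] using h_cont.tendsto.mono_left nhdsWithin_le_nhds

lemma tendsto_sum_Icc_log_one_add {x : ℝ} (hx : x ∈ Set.Ioc (-1) 1) :
    Tendsto (fun J : ℕ ↦ ∑ j ∈ Icc 1 J, (-1 : ℝ) ^ (j + 1) * (1 / (j : ℝ)) * x ^ j)
      atTop (𝓝 (Real.log (1 + x))) := by
  have h_range : ∀ J : ℕ, ∑ j ∈ Icc 1 J, (-1 : ℝ) ^ (j + 1) * (1 / (j : ℝ)) * x ^ j
      = ∑ i ∈ range J, (-1) ^ i * x ^ (i + 1) / (i + 1) := fun J ↦ by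
    rw [sum_Icc_one_eq_sum_range]
    refine sum_congr rfl fun i _ ↦ ?_
    push_cast
    ring
  simp only [h_range]
  rcases hx.2.lt_or_eq with hlt | rfl
  · exact (hasSum_log_one_add_of_abs_lt_one (abs_lt.2 ⟨hx.1, hlt⟩)).tendsto_sum_nat
  · rw [one_add_one_eq_two]
    refine tendsto_sum_range_alternating_harmonic.congr fun J ↦ sum_congr rfl fun i _ ↦ ?_
    rw [one_pow]
    ring

lemma neg_one_pow_mul_neg_one_pow_mul {R : Type*} [Ring R] (n : ℕ) (x : R) :
    (-1) ^ n * ((-1) ^ n * x) = x := by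
  rw [← mul_assoc, ← pow_add, Even.neg_one_pow ⟨n, rfl⟩, one_mul]

lemma sum_choose_mul_neg_one_pow_mul_pow (y : ℝ) (p : ℕ) :
    ∑ k ∈ range (p + 1), (p.choose k : ℝ) * (-1) ^ (p - k) * y ^ k = (-1) ^ p * (1 - y) ^ p := by
  rw [← mul_pow, neg_one_mul, neg_sub, sub_eq_add_neg, add_pow]
  exact sum_congr rfl fun k _ ↦ by ring

lemma sum_sum_choose_mul_neg_one_pow_mul_pow (x y : ℝ) (n m : ℕ) :
    ∑ k ∈ range (n + 1), ∑ l ∈ range (m + 1),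
        (n.choose k : ℝ) * (m.choose l : ℝ) * (-1) ^ ((n - k) + (m - l)) * (x ^ k * y ^ l)
      = (-1) ^ (n + m) * ((1 - x) ^ n * (1 - y) ^ m) := by
  rw [pow_add, mul_mul_mul_comm, ← sum_choose_mul_neg_one_pow_mul_pow,
    ← sum_choose_mul_neg_one_pow_mul_pow, sum_mul_sum]
  exact sum_congr rfl fun k _ ↦ sum_congr rfl fun l _ ↦ by ring

lemma sum_mul_one_sub_pow_mul_one_sub_pow (f : ℕ → ℝ) (s : Finset ℕ) (x y : ℝ) (n m : ℕ) :
    ∑ j ∈ s, f j * (1 - x ^ j) ^ n * (1 - y ^ j) ^ m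
      = (-1) ^ (n + m) * ∑ k ∈ range (n + 1), ∑ l ∈ range (m + 1),
          (n.choose k : ℝ) * (m.choose l : ℝ) * (-1) ^ ((n - k) + (m - l))
            * ∑ j ∈ s, f j * (x ^ k * y ^ l) ^ j := by
  have h_term (j : ℕ) : f j * (1 - x ^ j) ^ n * (1 - y ^ j) ^ m
      = (-1) ^ (n + m) * ∑ k ∈ range (n + 1), ∑ l ∈ range (m + 1),
          (n.choose k : ℝ) * (m.choose l : ℝ) * (-1) ^ ((n - k) + (m - l))
            * (f j * (x ^ k * y ^ l) ^ j) := by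
    have h := sum_sum_choose_mul_neg_one_pow_mul_pow (x ^ j) (y ^ j) n m
    simp_rw [← pow_mul, mul_comm j, pow_mul, ← mul_pow] at h
    simp_rw [mul_left_comm _ (f j), ← mul_sum, h]
    rw [mul_left_comm, neg_one_pow_mul_neg_one_pow_mul, mul_assoc]
  rw [sum_congr rfl fun j _ ↦ h_term j, ← mul_sum]
  simp_rw [mul_sum]
  rw [sum_comm]
  exact sum_congr rfl fun k _ ↦ sum_comm

theorem stmt_10_general (a b : ℝ) (ha0 : 0 < a) (ha1 : a < 1) (hb0 : 0 < b)
    (hb1 : b ≤ 1) (n m : ℕ) :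
    ∃ L : ℝ,
      Tendsto (fun J : ℕ => ∑ j ∈ Finset.Icc 1 J,
          (-1 : ℝ) ^ (j + 1) * (1 / (j : ℝ)) * (1 - a ^ j) ^ n
            * (1 - b ^ j) ^ m) atTop (nhds L) ∧
      ∑ k ∈ Finset.range (n + 1), ∑ l ∈ Finset.range (m + 1),
          (n.choose k : ℝ) * (m.choose l : ℝ) * (-1 : ℝ) ^ ((n - k) + (m - l))
            * Real.log (1 + a ^ k * b ^ l)
        = (-1 : ℝ) ^ (n + m) * L := by
  have h_mem (k l : ℕ) : a ^ k * b ^ l ∈ Set.Ioc (-1) 1 :=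
    ⟨by linarith [show 0 < a ^ k * b ^ l by positivity],
      mul_le_one₀ (pow_le_one₀ ha0.le ha1.le) (by positivity) (pow_le_one₀ hb0.le hb1)⟩
  refine ⟨(-1) ^ (n + m) * ∑ k ∈ range (n + 1), ∑ l ∈ range (m + 1),
      (n.choose k : ℝ) * (m.choose l : ℝ) * (-1) ^ ((n - k) + (m - l))
        * Real.log (1 + a ^ k * b ^ l), ?_, ?_⟩
  · refine (Tendsto.const_mul _ <| tendsto_finsetSum _ fun k _ ↦ tendsto_finsetSum _
      fun l _ ↦ (tendsto_sum_Icc_log_one_add (h_mem k l)).const_mul _).congr fun J ↦ ?_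
    exact (sum_mul_one_sub_pow_mul_one_sub_pow (fun j ↦ (-1) ^ (j + 1) * (1 / (j : ℝ)))
      (Icc 1 J) a b n m).symm
  · rw [neg_one_pow_mul_neg_one_pow_mul]

/-- Explicit series representation of the vacuum potential of the
time-evolved Widom–Rowlinson model (Section 4.3): for `0 < a < 1`,
`0 < b ≤ 1` and `n + m ≥ 1`, the series
`∑_{j=1}^∞ (-1)^{j+1} (1/j)(1-a^j)^n (1-b^j)^m` converges, and the
alternating double binomial sum of `log(1 + a^k b^l)` equals `(-1)^{n+m}`
times its value. -/
theorem stmt_10 (a b : ℝ) (ha0 : 0 < a) (ha1 : a < 1) (hb0 : 0 < b)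
    (hb1 : b ≤ 1) (n m : ℕ) (hnm : 1 ≤ n + m) :
    ∃ L : ℝ,
      Tendsto (fun J : ℕ => ∑ j ∈ Finset.Icc 1 J,
          (-1 : ℝ) ^ (j + 1) * (1 / (j : ℝ)) * (1 - a ^ j) ^ n
            * (1 - b ^ j) ^ m) atTop (nhds L) ∧
      ∑ k ∈ Finset.range (n + 1), ∑ l ∈ Finset.range (m + 1),
          (n.choose k : ℝ) * (m.choose l : ℝ) * (-1 : ℝ) ^ ((n - k) + (m - l))
            * Real.log (1 + a ^ k * b ^ l)
        = (-1 : ℝ) ^ (n + m) * L :=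
  stmt_10_general a b ha0 ha1 hb0 hb1 n m
end
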